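/- arXiv:1306.4827 — 6 statements merged into one kernel-verified Lean document; each statement's English description precedes it below -/
import Mathlib

section
/- Let S be a transformation semigroup on a finite set Ω and Gr(S) the associated graph (v adjacent to w iff no f∈S collapses them). Then the clique number of Gr(S) equals the minimum rank of an element of S. -/
open Finset

variable {Ω : Type*} [Fintype Ω] [DecidableEq Ω]

/-- The graph associated to a set of transformations: `v ~ w` iff no `f ∈ S` collapses them. -/
def Gr (S : Set (Ω → Ω)) : SimpleGraph Ω where
  Adj v w := v ≠ w ∧ ∀ f ∈ S, f v ≠ f w
  symm := ⟨by rintro v w ⟨h1, h2⟩; exact ⟨h1.symm, fun f hf => (h2 f hf).symm⟩⟩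
  loopless := ⟨by rintro v ⟨h, _⟩; exact h rfl⟩

/-- The rank of a transformation of a finite set: the size of its image. -/
def rank (f : Ω → Ω) : ℕ := (Finset.univ.image f).card

/-- A permutation group is primitive if it is transitive and all blocks are trivial. -/
def IsPrimitive (G : Subgroup (Equiv.Perm Ω)) : Prop :=
  MulAction.IsPretransitive G Ω ∧
    ∀ B : Set Ω, MulAction.IsBlock G B → B.Subsingleton ∨ B = Set.univ

/-- The semigroup generated by a permutation group `G` and a transformation `f`. -/
def genSemigroup (G : Subgroup (Equiv.Perm Ω)) (f : Ω → Ω) : Subsemigroup (Function.End Ω) :=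
  Subsemigroup.closure ((fun g : Equiv.Perm Ω => (g : Ω → Ω)) '' (G : Set (Equiv.Perm Ω)) ∪ {f})

/-- `G` synchronizes `f` if `⟨G, f⟩` contains a constant map. -/
def Synchronizes (G : Subgroup (Equiv.Perm Ω)) (f : Ω → Ω) : Prop :=
  ∃ h ∈ genSemigroup G f, ∃ c : Ω, ∀ x : Ω, h x = c

/-- `f` has kernel type `(k,1,…,1)`: one kernel class of size `k`, all others singletons. -/
def KernelTypeK (f : Ω → Ω) (k : ℕ) : Prop :=
  ∃ A : Finset Ω, A.card = k ∧ (∀ x ∈ A, ∀ y ∈ A, f x = f y) ∧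
    ∀ x y : Ω, f x = f y → x = y ∨ (x ∈ A ∧ y ∈ A)

/-- `f` has kernel type `(3,2,1,…,1)`. -/
def KernelType32 (f : Ω → Ω) : Prop :=
  ∃ A B : Finset Ω, A.card = 3 ∧ B.card = 2 ∧
    (∀ x ∈ A, ∀ y ∈ A, f x = f y) ∧ (∀ x ∈ B, ∀ y ∈ B, f x = f y) ∧
    ∀ x y : Ω, f x = f y → x = y ∨ (x ∈ A ∧ y ∈ A) ∨ (x ∈ B ∧ y ∈ B)

/-! The image of a map of minimum rank is a clique, since any `g ∈ S` collapsing two of its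
points would give `g ∘ f ∈ S` of smaller rank; conversely every `f ∈ S` is injective on a
clique, so no clique is larger than the minimum rank. -/

theorem rank_comp (f g : Ω → Ω) : rank (g ∘ f) = ((univ.image f).image g).card := by
  rw [rank, image_image]

theorem rank_comp_lt_of_collapse {f g : Ω → Ω} {v w : Ω} (hv : v ∈ univ.image f)
    (hw : w ∈ univ.image f) (hvw : v ≠ w) (hg : g v = g w) : rank (g ∘ f) < rank f := by
  have hnotInj : ¬ Set.InjOn g (univ.image f) := fun hinj => hvw (hinj hv hw hg)
  rw [rank_comp, rank]
  exact lt_of_le_of_ne card_image_le (mt card_image_iff.mp hnotInj)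

theorem isClique_image_of_rank_le {S : Set (Ω → Ω)} (hS : ∀ f ∈ S, ∀ g ∈ S, (g ∘ f) ∈ S)
    {f : Ω → Ω} (hf : f ∈ S) (hmin : ∀ g ∈ S, rank f ≤ rank g) :
    (Gr S).IsClique (univ.image f : Set Ω) := by
  intro v hv w hw hvw
  refine ⟨hvw, fun g hg hgvw => ?_⟩
  exact (rank_comp_lt_of_collapse hv hw hvw hgvw).not_ge (hmin _ (hS f hf g hg))

omit [Fintype Ω] in
theorem injOn_of_isClique {S : Set (Ω → Ω)} {t : Set Ω} (ht : (Gr S).IsClique t)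
    {f : Ω → Ω} (hf : f ∈ S) : Set.InjOn f t := by
  intro v hv w hw hfvw
  by_contra hne
  exact (ht hv hw hne).2 f hf hfvw

theorem card_le_rank_of_isClique {S : Set (Ω → Ω)} {t : Finset Ω} (ht : (Gr S).IsClique t)
    {f : Ω → Ω} (hf : f ∈ S) : t.card ≤ rank f := by
  rw [← card_image_of_injOn (injOn_of_isClique ht hf)]
  exact card_le_card (image_subset_image (subset_univ t))

theorem stmt3 (S : Set (Ω → Ω)) (hS : ∀ f ∈ S, ∀ g ∈ S, (g ∘ f) ∈ S) (r : ℕ)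
    (hr : ∃ f ∈ S, rank f = r) (hmin : ∀ f ∈ S, r ≤ rank f) :
    IsGreatest {n : ℕ | ∃ t : Finset Ω, (Gr S).IsNClique n t} r := by
  obtain ⟨f, hf, rfl⟩ := hr
  refine ⟨⟨univ.image f, ?_, rfl⟩, ?_⟩
  · simpa only [coe_image, coe_univ, Set.image_univ] using isClique_image_of_rank_le hS hf hmin
  · rintro n ⟨t, ht⟩
    exact ht.card_eq ▸ card_le_rank_of_isClique ht.isClique hf
end

section
/- Let S be a transformation semigroup on a finite set Ω and Gr(S) the associated graph. Then the chromatic number of Gr(S) equals the minimum rank of an element of S. -/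
open Finset

variable {Ω : Type*} [Fintype Ω] [DecidableEq Ω]

theorem rank_comp_lt_of_not_injOn {f g : Ω → Ω} (hg : ¬Set.InjOn g ↑(univ.image f)) :
    rank (g ∘ f) < rank f := by
  rw [rank_comp]
  exact card_image_le.lt_of_ne (mt card_image_iff.mp hg)

theorem Gr.colorable_rank {S : Set (Ω → Ω)} {f : Ω → Ω} (hf : f ∈ S) :
    (Gr S).Colorable (rank f) := by
  let C : (Gr S).Coloring (univ.image f) :=
    ⟨fun v => ⟨f v, mem_image_of_mem f (mem_univ v)⟩, fun h => by simpa using h.2 f hf⟩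
  rw [rank, ← Fintype.card_coe]
  exact C.colorable

/-- Every `g ∈ S` is injective on the image of `f`, since otherwise `g ∘ f ∈ S` would have
smaller rank than `f`. -/
theorem Gr.isClique_image_of_rank_minimal {S : Set (Ω → Ω)}
    (hS : ∀ f ∈ S, ∀ g ∈ S, (g ∘ f) ∈ S) {f : Ω → Ω} (hf : f ∈ S)
    (hmin : ∀ g ∈ S, rank f ≤ rank g) : (Gr S).IsClique ↑(univ.image f) := by
  intro x hx y hy hxy
  refine ⟨hxy, fun g hg hgxy => ?_⟩
  have hlt : rank (g ∘ f) < rank f :=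
    rank_comp_lt_of_not_injOn fun hinj => hxy (hinj hx hy hgxy)
  exact (hmin _ (hS f hf g hg)).not_gt hlt

theorem stmt4 (S : Set (Ω → Ω)) (hS : ∀ f ∈ S, ∀ g ∈ S, (g ∘ f) ∈ S) (r : ℕ)
    (hr : ∃ f ∈ S, rank f = r) (hmin : ∀ f ∈ S, r ≤ rank f) :
    (Gr S).chromaticNumber = (r : ℕ∞) := by
  obtain ⟨f, hf, rfl⟩ := hr
  refine le_antisymm (Gr.colorable_rank hf).chromaticNumber_le ?_
  simpa [rank] using (Gr.isClique_image_of_rank_minimal hS hf hmin).card_le_chromaticNumber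
end

section
/- If a primitive permutation group G on a finite set Ω contains a transposition, then G is the full symmetric group on Ω. -/
open Finset

variable {Ω : Type*} [Fintype Ω] [DecidableEq Ω]

theorem IsPrimitive.isPreprimitive {α : Type*} {G : Subgroup (Equiv.Perm α)}
    (hG : IsPrimitive G) : MulAction.IsPreprimitive G α :=
  have := hG.1
  ⟨fun hB => hG.2 _ hB⟩

theorem stmt5 (G : Subgroup (Equiv.Perm Ω)) (hG : IsPrimitive G) {a b : Ω}
    (hab : a ≠ b) (hswap : Equiv.swap a b ∈ G) : G = ⊤ :=
  Equiv.Perm.subgroup_eq_top_of_isPreprimitive_of_isSwap_mem hG.isPreprimitive _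
    ⟨a, b, hab, rfl⟩ hswap
end

section
/- Let X be a graph that is neither complete nor null, and let G ≤ Aut(X) be a primitive permutation group on the vertices of X. Then no two distinct vertices of X have the same neighbourhood. -/
open Finset

variable {Ω : Type*} [Fintype Ω] [DecidableEq Ω]

/-!
Having the same neighbourhood is an equivalence relation preserved by every automorphism, so its
classes are blocks of `G`. By primitivity they are either singletons, which is the claim, or all
of the vertex set; but if all vertices share one neighbourhood `N`, then `v ∈ N` would force
`v ∈ N(v)`, so the graph would be null.
-/

open scoped Pointwise

namespace SimpleGraph

section Blocks

variable {V G : Type*} [Group G] [MulAction G V] {X : SimpleGraph V}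

theorem adj_smul_iff (hX : ∀ (g : G) v w, X.Adj v w → X.Adj (g • v) (g • w)) (g : G) {v w : V} :
    X.Adj (g • v) (g • w) ↔ X.Adj v w :=
  ⟨fun h => by simpa using hX g⁻¹ _ _ h, hX g v w⟩

theorem neighborSet_smul (hX : ∀ (g : G) v w, X.Adj v w → X.Adj (g • v) (g • w)) (g : G)
    (v : V) : X.neighborSet (g • v) = g • X.neighborSet v := by
  ext w
  rw [Set.mem_smul_set_iff_inv_smul_mem, mem_neighborSet, mem_neighborSet,
    ← adj_smul_iff hX g (v := v) (w := g⁻¹ • w), smul_inv_smul]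

def neighborSetMulActionHom (hX : ∀ (g : G) v w, X.Adj v w → X.Adj (g • v) (g • w)) :
    V →[G] Set V where
  toFun := X.neighborSet
  map_smul' := neighborSet_smul hX

theorem isBlock_setOf_neighborSet_eq (hX : ∀ (g : G) v w, X.Adj v w → X.Adj (g • v) (g • w))
    (a : V) : MulAction.IsBlock G {v | X.neighborSet v = X.neighborSet a} :=
  MulAction.IsBlock.singleton.preimage (neighborSetMulActionHom hX)

end Blocks

theorem eq_bot_of_forall_neighborSet_eq {V : Type*} {X : SimpleGraph V}
    (h : ∀ v w, X.neighborSet v = X.neighborSet w) : X = ⊥ := by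
  ext v w
  simp only [bot_adj, iff_false]
  intro hvw
  rw [← mem_neighborSet, h v w] at hvw
  exact X.irrefl hvw

end SimpleGraph

theorem stmt6_general (X : SimpleGraph Ω) (hbot : X ≠ ⊥)
    (G : Subgroup (Equiv.Perm Ω)) (hprim : IsPrimitive G)
    (hAut : ∀ g ∈ G, ∀ v w : Ω, X.Adj v w → X.Adj (g v) (g w)) :
    ∀ a b : Ω, X.neighborSet a = X.neighborSet b → a = b := by
  intro a b hab
  have hX : ∀ (g : G) v w, X.Adj v w → X.Adj (g • v) (g • w) := fun g => hAut g g.2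
  rcases hprim.2 _ (X.isBlock_setOf_neighborSet_eq hX a) with hsub | huniv
  · exact hsub rfl hab.symm
  · refine absurd (X.eq_bot_of_forall_neighborSet_eq fun v w => ?_) hbot
    have hN : ∀ u, X.neighborSet u = X.neighborSet a := Set.eq_univ_iff_forall.mp huniv
    rw [hN v, hN w]

theorem stmt6 (X : SimpleGraph Ω) (hbot : X ≠ ⊥) (htop : X ≠ ⊤)
    (G : Subgroup (Equiv.Perm Ω)) (hprim : IsPrimitive G)
    (hAut : ∀ g ∈ G, ∀ v w : Ω, X.Adj v w → X.Adj (g v) (g w)) :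
    ∀ a b : Ω, X.neighborSet a = X.neighborSet b → a = b :=
  stmt6_general X hbot G hprim hAut
end

section
/- Let Γ be a non-null graph whose automorphism group contains a primitive group G, and suppose Γ has chromatic number r. Then Γ contains no subgraph isomorphic to the complete graph on r+1 vertices with one edge removed. -/
/-!
Call two vertices equivalent if every `r`-colouring of `Γ` gives them the same colour. This is an
equivalence relation invariant under the automorphisms of `Γ`, hence under `G`, so by primitivity
it is either equality or universal. A copy of `K_{r+1}` minus the edge `ab` forces `a` and `b` to
share a colour in every `r`-colouring, so it is not equality; and since `Γ` has an edge and an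
`r`-colouring, it is not universal either.
-/

open Finset

variable {Ω : Type*} [Fintype Ω] [DecidableEq Ω]

namespace MulAction

variable {G X : Type*} [Group G] [MulAction G X]

lemma isBlock_setOf_rel (r : Setoid X) (hr : ∀ (g : G) x y, r x y → r (g • x) (g • y))
    (a : X) : IsBlock G {x | r a x} := by
  have hr_iff : ∀ (g : G) x y, r (g • x) (g • y) ↔ r x y := fun g x y =>
    ⟨fun h => by simpa using hr g⁻¹ _ _ h, hr g x y⟩
  rw [isBlock_iff_smul_eq_of_mem]
  intro g b (hb : r a b) (hgb : r a (g • b))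
  have hga : r a (g • a) := r.trans hgb (r.symm ((hr_iff g a b).2 hb))
  ext x
  rw [Set.mem_smul_set_iff_inv_smul_mem, Set.mem_ofPred_eq, Set.mem_ofPred_eq,
    ← hr_iff g, smul_inv_smul]
  exact ⟨r.trans hga, r.trans (r.symm hga)⟩

end MulAction

lemma IsPrimitive.rel_of_rel_of_ne {X : Type*} {G : Subgroup (Equiv.Perm X)}
    (hprim : IsPrimitive G) (r : Setoid X) (hr : ∀ (g : G) x y, r x y → r (g • x) (g • y))
    {a b : X} (hab : r a b) (hne : a ≠ b) (x y : X) : r x y := by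
  rcases hprim.2 _ (MulAction.isBlock_setOf_rel r hr a) with hsub | huniv
  · exact absurd (hsub (r.refl a) hab) hne
  · have hmem : ∀ z, r a z := Set.eq_univ_iff_forall.mp huniv
    exact r.trans (r.symm (hmem x)) (hmem y)

namespace SimpleGraph

variable {V W : Type*} (Γ : SimpleGraph V) (α : Type*)

def sameColorSetoid : Setoid V := Setoid.ker fun v (c : Γ.Coloring α) => c v

variable {Γ α}

lemma sameColorSetoid_iff {x y : V} : Γ.sameColorSetoid α x y ↔ ∀ c : Γ.Coloring α, c x = c y :=
  funext_iff

lemma sameColorSetoid_map {Γ' : SimpleGraph W} (φ : Γ →g Γ') {x y : V}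
    (h : Γ.sameColorSetoid α x y) : Γ'.sameColorSetoid α (φ x) (φ y) :=
  sameColorSetoid_iff.2 fun c => sameColorSetoid_iff.1 h (c.comp φ)

lemma not_sameColorSetoid_of_adj [Nonempty (Γ.Coloring α)] {v w : V} (h : Γ.Adj v w) :
    ¬ Γ.sameColorSetoid α v w := fun hvw =>
  let c := Classical.arbitrary (Γ.Coloring α)
  c.valid h (sameColorSetoid_iff.1 hvw c)

lemma Coloring.eq_of_adj_off_edge_of_card_lt [Fintype α] (c : Γ.Coloring α) {s : Finset V}
    (hcard : Fintype.card α < #s) {a b : V}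
    (hadj : ∀ x ∈ s, ∀ y ∈ s, x ≠ y → ¬(x = a ∧ y = b) → ¬(x = b ∧ y = a) → Γ.Adj x y) :
    c a = c b := by
  by_contra hcab
  have hinj : Set.InjOn c s := by
    intro x hx y hy hxy
    by_contra hxy'
    refine c.valid (hadj x hx y hy hxy' ?_ ?_) hxy
    · rintro ⟨rfl, rfl⟩; exact hcab hxy
    · rintro ⟨rfl, rfl⟩; exact hcab hxy.symm
  have := card_le_card_of_injOn c (fun _ _ => mem_coe.2 (mem_univ _)) hinj
  rw [card_univ] at this
  omega

end SimpleGraph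

open SimpleGraph in
theorem stmt7 (Γ : SimpleGraph Ω) (hne : Γ ≠ ⊥)
    (G : Subgroup (Equiv.Perm Ω)) (hprim : IsPrimitive G)
    (hAut : ∀ g ∈ G, ∀ v w : Ω, Γ.Adj v w → Γ.Adj (g v) (g w))
    (r : ℕ) (hchrom : Γ.chromaticNumber = (r : ℕ∞)) :
    ¬ ∃ s : Finset Ω, ∃ a ∈ s, ∃ b ∈ s, a ≠ b ∧ s.card = r + 1 ∧
      ∀ x ∈ s, ∀ y ∈ s, x ≠ y → ¬(x = a ∧ y = b) → ¬(x = b ∧ y = a) → Γ.Adj x y := by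
  rintro ⟨s, a, -, b, -, hab, hcard, hadj⟩
  obtain ⟨v, w, hvw⟩ := ne_bot_iff_exists_adj.1 hne
  have : Nonempty (Γ.Coloring (Fin r)) :=
    chromaticNumber_le_iff_colorable.1 hchrom.le
  have hab_same : Γ.sameColorSetoid (Fin r) a b := sameColorSetoid_iff.2 fun c =>
    c.eq_of_adj_off_edge_of_card_lt (by simp [hcard]) hadj
  have hinv : ∀ (g : G) x y, Γ.sameColorSetoid (Fin r) x y →
      Γ.sameColorSetoid (Fin r) (g • x) (g • y) := fun g _ _ =>
    sameColorSetoid_map (⟨g, hAut g g.2 _ _⟩ : Γ →g Γ)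
  exact not_sameColorSetoid_of_adj hvw (hprim.rel_of_rel_of_ne _ hinv hab_same hab v w)
end

section
/- Let G be a transitive permutation group on a finite set Ω and k > 1. Then G is imprimitive with a block of imprimitivity of size at least k if and only if G fails to synchronize some map f: Ω→Ω with kernel type (k,1,1,…,1). -/
/-! If `B` is a proper block with `k ≤ |B|`, collapse `k` points of `B` to one: every element of
`⟨G, f⟩` then reflects the relation "lie in a common translate of `B`", so none is constant.

Conversely, let `u ∈ ⟨G, f⟩` have minimal rank `r`; as `f` is not synchronized, `r ≥ 2`.
By Neumann's lemma all kernel classes of a minimal-rank element have size `|Ω| / r`. Comparing the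
kernels of `u` and `u ∘ f` shows that `u` identifies the `k` points `f(A) ∪ (Ω \ im f)`, where
`A` is the large kernel class of `f`, and so does every `u ∘ g` with `g ∈ G`. Hence these points
lie in one class of the `G`-congruence `x ≡ y ↔ ∀ g, u (g x) = u (g y)`, which is proper since
`r ≥ 2`. -/

open Finset

variable {Ω : Type*} [Fintype Ω] [DecidableEq Ω]

open Pointwise

section Counting

variable {G : Type*} [Group G] [Fintype G] [MulAction G Ω] [MulAction.IsPretransitive G Ω]

lemma card_mul_card_filter_smul_eq (i d : Ω) :
    Fintype.card Ω * #{g : G | g • i = d} = Fintype.card G := by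
  have hd (d : Ω) : #{g : G | g • i = d} = #{g : G | g • i = i} := by
    obtain ⟨g₀, rfl⟩ := MulAction.exists_smul_eq G i d
    refine card_equiv (Equiv.mulLeft g₀⁻¹) fun g => ?_
    simp [mul_smul, inv_smul_eq_iff]
  calc Fintype.card Ω * #{g : G | g • i = d} = ∑ d' : Ω, #{g : G | g • i = d'} := by
        simp [hd]
    _ = Fintype.card G := (card_eq_sum_card_fiberwise fun _ _ => mem_univ _).symm

lemma card_mul_sum_card_inter_smul (D I : Finset Ω) :
    Fintype.card Ω * ∑ g : G, #(D ∩ g • I) = #D * #I * Fintype.card G := by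
  have hcount (g : G) :
      #(D ∩ g • I) = ∑ i ∈ I, ∑ d ∈ D, if g • i = d then 1 else 0 := by
    rw [inter_comm, ← filter_mem_eq_inter, smul_finset_def, filter_image,
      card_image_of_injective _ (MulAction.injective g), card_filter]
    simp
  have hinner (i : Ω) : Fintype.card Ω * ∑ g : G, ∑ d ∈ D, (if g • i = d then 1 else 0) =
      #D * Fintype.card G := by
    simp_rw [sum_comm (s := univ), ← card_filter, mul_sum, card_mul_card_filter_smul_eq,
      sum_const, smul_eq_mul]
  simp only [hcount]
  rw [sum_comm, mul_sum]
  simp only [hinner, sum_const, smul_eq_mul]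
  ring

end Counting

def IsMinRank (S : Subsemigroup (Function.End Ω)) (u : Ω → Ω) : Prop :=
  u ∈ S ∧ ∀ v ∈ S, rank u ≤ rank v

section MinRank

variable {S : Subsemigroup (Function.End Ω)} {u v f : Ω → Ω}

lemma exists_isMinRank (hf : f ∈ S) : ∃ u, IsMinRank S u :=
  ⟨Function.argminOn rank (S : Set (Function.End Ω)) ⟨f, hf⟩, Function.argminOn_mem _ _ _,
    fun _ hv => Function.argminOn_le _ _ hv⟩

lemma univ_image_comp (u v : Ω → Ω) : univ.image (u ∘ v) = (univ.image v).image u :=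
  image_image.symm

lemma univ_image_comp_subset (u v : Ω → Ω) : univ.image (u ∘ v) ⊆ univ.image u := by
  rw [univ_image_comp]; exact image_subset_image (subset_univ _)

lemma rank_comp_le_left (u v : Ω → Ω) : rank (u ∘ v) ≤ rank u :=
  card_le_card (univ_image_comp_subset u v)

lemma rank_comp_le_right (u v : Ω → Ω) : rank (u ∘ v) ≤ rank v := by
  rw [rank, univ_image_comp]; exact card_image_le

namespace IsMinRank

lemma comp (hu : IsMinRank S u) (huv : u ∘ v ∈ S) : IsMinRank S (u ∘ v) :=
  ⟨huv, fun w hw => (rank_comp_le_left u v).trans (hu.2 w hw)⟩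

lemma univ_image_comp_eq (hu : IsMinRank S u) (huv : u ∘ v ∈ S) :
    univ.image (u ∘ v) = univ.image u :=
  eq_of_subset_of_card_le (univ_image_comp_subset u v) (hu.2 _ huv)

lemma injOn_univ_image (hu : IsMinRank S u) (huv : u ∘ v ∈ S) (hv : rank v ≤ rank u) :
    Set.InjOn u (univ.image v) := by
  refine card_image_iff.mp (le_antisymm card_image_le ?_)
  calc #(univ.image v) = rank v := rfl
    _ ≤ rank u := hv
    _ = #((univ.image v).image u) := by rw [← univ_image_comp, hu.univ_image_comp_eq huv]; rfl

end IsMinRank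

end MinRank

section MinRankTransitive

variable {G : Subgroup (Equiv.Perm Ω)} [MulAction.IsPretransitive G Ω]
  {S : Subsemigroup (Function.End Ω)} {u f : Ω → Ω}

/-- Neumann's lemma: each fibre of `u` meets every translate `g • im u` in exactly one point. -/
lemma IsMinRank.card_fiber_mul_rank (hGS : ∀ g ∈ G, ⇑g ∈ S) (hu : IsMinRank S u) {y : Ω}
    (hy : y ∈ univ.image u) : #{x | u x = y} * rank u = Fintype.card Ω := by
  let _ : Fintype G := Fintype.ofFinite G
  have hmeet (g : G) : #(({x | u x = y} : Finset Ω) ∩ g • univ.image u) = 1 := by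
    have hgu : univ.image (⇑(g : Equiv.Perm Ω) ∘ u) = g • univ.image u := by
      rw [univ_image_comp]; rfl
    have huv : u ∘ ⇑(g : Equiv.Perm Ω) ∘ u ∈ S := mul_mem hu.1 (mul_mem (hGS g g.2) hu.1)
    have hinj := hu.injOn_univ_image huv (rank_comp_le_right _ _)
    rw [hgu] at hinj
    obtain ⟨x, hx, rfl⟩ := mem_image.1 <| show y ∈ (g • univ.image u).image u by
      rwa [← hgu, ← univ_image_comp, hu.univ_image_comp_eq huv]
    refine card_eq_one.2 ⟨x, eq_singleton_iff_unique_mem.2 ⟨by simpa using hx, ?_⟩⟩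
    intro x' hx'
    simp only [mem_inter, mem_filter, mem_univ, true_and] at hx'
    exact hinj hx'.2 hx hx'.1
  have hcount := card_mul_sum_card_inter_smul (G := G) {x | u x = y} (univ.image u)
  simp only [hmeet, sum_const, card_univ, smul_eq_mul, mul_one] at hcount
  exact (Nat.eq_of_mul_eq_mul_right Fintype.card_pos hcount).symm

/-- `u ∘ f` has the image and rank of `u`, hence equally large fibres; `f` maps its fibre over
`u z` injectively into the fibre of `u` over `u z`, which would leave no room for `z`. -/
lemma IsMinRank.apply_eq_of_notMem_image (hGS : ∀ g ∈ G, ⇑g ∈ S) (hu : IsMinRank S u)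
    (hf : f ∈ S) {a : Ω} (hfa : ∀ x y, f x = f y → x = y ∨ f x = f a) {z : Ω}
    (hz : z ∉ univ.image f) : u z = u (f a) := by
  by_contra hne
  have huf : u ∘ f ∈ S := mul_mem hu.1 hf
  have hy : u z ∈ univ.image u := mem_image_of_mem u (mem_univ z)
  have hcard : #{x | (u ∘ f) x = u z} = #{x | u x = u z} := by
    have h1 := (hu.comp huf).card_fiber_mul_rank hGS (hu.univ_image_comp_eq huf ▸ hy)
    rw [show rank (u ∘ f) = rank u from congrArg card (hu.univ_image_comp_eq huf)] at h1
    exact Nat.eq_of_mul_eq_mul_right (card_pos.2 ⟨_, hy⟩)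
      (h1.trans (hu.card_fiber_mul_rank hGS hy).symm)
  have hinj : Set.InjOn f {x | (u ∘ f) x = u z} := fun x hx x' _ hxx' =>
    (hfa x x' hxx').resolve_right fun hxa => hne (hxa ▸ (show u (f x) = u z from hx).symm)
  have hsub : ({x | (u ∘ f) x = u z} : Finset Ω).image f ⊆
      ({x | u x = u z} : Finset Ω).erase z := by
    intro w hw
    obtain ⟨x, hx, rfl⟩ := mem_image.1 hw
    simp only [mem_filter, mem_univ, true_and, Function.comp_apply] at hx
    simp only [mem_erase, mem_filter, mem_univ, true_and]
    exact ⟨fun hxz => hz (hxz ▸ mem_image_of_mem f (mem_univ x)), hx⟩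
  have hle := card_le_card hsub
  rw [card_image_of_injOn (by simpa using hinj), hcard] at hle
  exact (card_erase_lt_of_mem (by simp)).not_ge hle

end MinRankTransitive

section Blocks

variable {G X α : Type*} [Group G] [MulAction G X]

lemma smul_setOf_forall_apply_smul_eq (h : X → α) (a : X) (g : G) :
    g • {y | ∀ g' : G, h (g' • y) = h (g' • a)} =
      {y | ∀ g' : G, h (g' • y) = h (g' • g • a)} := by
  ext y
  simp only [Set.mem_smul_set_iff_inv_smul_mem, Set.mem_ofPred_eq]
  constructor
  · intro H g'
    simpa [mul_smul] using H (g' * g)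
  · intro H g'
    simpa [mul_smul] using H (g' * g⁻¹)

lemma isBlock_setOf_forall_apply_smul_eq (h : X → α) (a : X) :
    MulAction.IsBlock G {y | ∀ g : G, h (g • y) = h (g • a)} := by
  refine MulAction.isBlock_iff_smul_eq_smul_of_nonempty.2 fun g₁ g₂ ⟨y, hy₁, hy₂⟩ => ?_
  simp only [smul_setOf_forall_apply_smul_eq] at hy₁ hy₂ ⊢
  ext x
  simp only [Set.mem_ofPred_eq]
  exact forall_congr' fun g => by rw [← hy₁ g, hy₂ g]

lemma exists_isBlock_superset_ne_univ [Fintype X] (h : X → α) (F : Finset X) {a z : X}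
    (hF : ∀ g : G, ∀ x ∈ F, h (g • x) = h (g • a)) (hz : h z ≠ h a) :
    ∃ B : Finset X, MulAction.IsBlock G (B : Set X) ∧ F ⊆ B ∧ (B : Set X) ≠ Set.univ := by
  classical
  set B : Finset X := {y | ∀ g : G, h (g • y) = h (g • a)}
  refine ⟨B, ?_, fun x hx => ?_, fun hB => hz ?_⟩
  · simpa [B] using isBlock_setOf_forall_apply_smul_eq h a
  · simpa [B] using (hF · x hx)
  · have hzB : z ∈ (B : Set X) := hB ▸ trivial
    simpa using (mem_filter.1 hzB).2 1

end Blocks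

section SameTranslate

variable {X : Type*}

def SameTranslate (G : Type*) [SMul G X] (B : Set X) (x y : X) : Prop :=
  ∃ g : G, x ∈ g • B ∧ y ∈ g • B

variable {G : Type*} [Group G] [MulAction G X] {B : Set X} {x y z : X}

lemma SameTranslate.symm : SameTranslate G B x y → SameTranslate G B y x :=
  fun ⟨g, hx, hy⟩ => ⟨g, hy, hx⟩

lemma sameTranslate_refl [MulAction.IsPretransitive G X] {b : X} (hb : b ∈ B) (x : X) :
    SameTranslate G B x x := by
  obtain ⟨g, rfl⟩ := MulAction.exists_smul_eq G b x
  exact ⟨g, Set.smul_mem_smul_set hb, Set.smul_mem_smul_set hb⟩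

lemma MulAction.IsBlock.sameTranslate_trans (hB : MulAction.IsBlock G B) :
    SameTranslate G B x y → SameTranslate G B y z → SameTranslate G B x z :=
  fun ⟨_, hx, hy⟩ ⟨g₂, hy', hz⟩ =>
    ⟨g₂, hB.smul_eq_smul_of_nonempty ⟨y, hy, hy'⟩ ▸ hx, hz⟩

lemma SameTranslate.of_smul (g : G) :
    SameTranslate G B (g • x) (g • y) → SameTranslate G B x y :=
  fun ⟨g', hx, hy⟩ => ⟨g⁻¹ * g', by rwa [mul_smul, Set.mem_inv_smul_set_iff],
    by rwa [mul_smul, Set.mem_inv_smul_set_iff]⟩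

end SameTranslate

section Forward

variable {X : Type*} {G : Subgroup (Equiv.Perm X)} {B : Set X} {f : X → X}

lemma MulAction.IsBlock.sameTranslate_of_mem_genSemigroup (hB : MulAction.IsBlock G B)
    (hf : ∀ x, SameTranslate G B x (f x)) {u : Function.End X} (hu : u ∈ genSemigroup G f) :
    ∀ x y, SameTranslate G B (u x) (u y) → SameTranslate G B x y := by
  induction hu using Subsemigroup.closure_induction with
  | mem v hv =>
    rcases hv with ⟨g, hg, rfl⟩ | rfl
    · exact fun x y => SameTranslate.of_smul (⟨g, hg⟩ : G)
    · exact fun x y hxy =>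
        hB.sameTranslate_trans (hf x) (hB.sameTranslate_trans hxy (hf y).symm)
  | mul v w _ _ ihv ihw => exact fun x y hxy => ihw x y (ihv _ _ hxy)

lemma not_synchronizes_of_isBlock [MulAction.IsPretransitive G X] (hB : MulAction.IsBlock G B)
    {b : X} (hb : b ∈ B) (hBu : B ≠ Set.univ) (hf : ∀ x, SameTranslate G B x (f x)) :
    ¬ Synchronizes G f := by
  rintro ⟨u, hu, c, hc⟩
  refine hBu (Set.eq_univ_of_forall fun y => ?_)
  obtain ⟨g, hbg, hyg⟩ := hB.sameTranslate_of_mem_genSemigroup hf hu b y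
    (by rw [hc, hc]; exact sameTranslate_refl hb c)
  rwa [hB.smul_eq_of_nonempty ⟨b, hbg, hb⟩] at hyg

lemma kernelTypeK_ite [DecidableEq X] {A : Finset X} {a : X} (ha : a ∈ A) :
    KernelTypeK (fun x => if x ∈ A then a else x) #A := by
  refine ⟨A, rfl, fun x hx y hy => by simp [hx, hy], fun x y hxy => ?_⟩
  by_cases hx : x ∈ A <;> by_cases hy : y ∈ A <;>
    simp only [hx, hy, if_true, if_false] at hxy
  · exact Or.inr ⟨hx, hy⟩
  · exact absurd (hxy ▸ ha) hy
  · exact absurd (hxy ▸ ha) hx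
  · exact Or.inl hxy

lemma sameTranslate_ite [MulAction.IsPretransitive G X] [DecidableEq X] {A : Finset X}
    (hAB : ↑A ⊆ B) {a : X} (ha : a ∈ A) (x : X) :
    SameTranslate G B x (if x ∈ A then a else x) := by
  split_ifs with hx
  · exact ⟨1, by simpa using hAB hx, by simpa using hAB ha⟩
  · exact sameTranslate_refl (hAB ha) x

end Forward

lemma KernelTypeK.rank_add {f : Ω → Ω} {k : ℕ} (hf : KernelTypeK f k) (hk : 0 < k) :
    rank f + k = Fintype.card Ω + 1 := by
  obtain ⟨A, rfl, hAc, hAker⟩ := hf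
  obtain ⟨a, ha⟩ := card_pos.1 hk
  set T := insert a (univ \ A)
  have himage : univ.image f = T.image f := by
    ext y
    simp only [mem_image, mem_univ, true_and]
    constructor
    · rintro ⟨x, rfl⟩
      by_cases hx : x ∈ A
      · exact ⟨a, mem_insert_self _ _, hAc a ha x hx⟩
      · exact ⟨x, by simp [T, hx], rfl⟩
    · rintro ⟨x, -, rfl⟩
      exact ⟨x, rfl⟩
  have hinj : Set.InjOn f T := by
    intro x hx y hy hxy
    have hTA (w : Ω) (hw : w ∈ T) (hwA : w ∈ A) : w = a := by
      simpa [T, hwA] using hw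
    rcases hAker x y hxy with h | ⟨hxA, hyA⟩
    · exact h
    · rw [hTA x hx hxA, hTA y hy hyA]
  have hT : #T = Fintype.card Ω - #A + 1 := by
    rw [card_insert_of_notMem (by simp [ha]), card_univ_sdiff]
  rw [rank, himage, card_image_of_injOn hinj, hT]
  have := card_le_univ A
  omega

theorem exists_isBlock_of_not_synchronizes (G : Subgroup (Equiv.Perm Ω))
    [MulAction.IsPretransitive G Ω] {f : Ω → Ω} {k : ℕ} (hk : 0 < k) (hf : KernelTypeK f k)
    (hns : ¬ Synchronizes G f) :
    ∃ B : Finset Ω,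
      MulAction.IsBlock G (B : Set Ω) ∧ k ≤ #B ∧ (B : Set Ω) ≠ Set.univ := by
  have hrank := hf.rank_add hk
  obtain ⟨A, hAk, hAc, hAker⟩ := hf
  obtain ⟨a, ha⟩ := card_pos.1 (hAk ▸ hk)
  have hfa (x y : Ω) (hxy : f x = f y) : x = y ∨ f x = f a :=
    (hAker x y hxy).imp_right fun h => hAc x h.1 a ha
  have hfS : f ∈ genSemigroup G f := Subsemigroup.subset_closure (Or.inr rfl)
  have hGS : ∀ g ∈ G, ⇑g ∈ genSemigroup G f :=
    fun g hg => Subsemigroup.subset_closure (Or.inl ⟨g, hg, rfl⟩)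
  obtain ⟨u, hu⟩ := exists_isMinRank hfS
  obtain ⟨z, hz⟩ : ∃ z, u z ≠ u (f a) := by
    by_contra! h
    exact hns ⟨u, hu.1, u (f a), h⟩
  set F := insert (f a) (univ \ univ.image f)
  have hF (g : G) (x : Ω) (hx : x ∈ F) : u (g • x) = u (g • f a) := by
    have hug := hu.comp (mul_mem hu.1 (hGS g g.2))
    rcases mem_insert.1 hx with rfl | hx
    · rfl
    · exact hug.apply_eq_of_notMem_image hGS hfS hfa (mem_sdiff.1 hx).2
  have hFk : #F = k := by
    rw [card_insert_of_notMem (by simp), card_univ_sdiff]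
    have : rank f ≤ Fintype.card Ω := card_le_univ _
    unfold rank at hrank this
    omega
  obtain ⟨B, hB, hFB, hBu⟩ := exists_isBlock_superset_ne_univ u F hF hz
  exact ⟨B, hB, hFk ▸ card_le_card hFB, hBu⟩

theorem stmt10 (G : Subgroup (Equiv.Perm Ω)) (hG : MulAction.IsPretransitive G Ω)
    (k : ℕ) (hk : 1 < k) :
    (∃ B : Finset Ω, MulAction.IsBlock G (B : Set Ω) ∧ k ≤ B.card ∧ (B : Set Ω) ≠ Set.univ) ↔
      ∃ f : Ω → Ω, KernelTypeK f k ∧ ¬ Synchronizes G f := by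
  constructor
  · rintro ⟨B, hB, hkB, hBu⟩
    obtain ⟨A, hAB, rfl⟩ := exists_subset_card_eq hkB
    obtain ⟨a, ha⟩ := card_pos.1 (by omega : 0 < #A)
    exact ⟨_, kernelTypeK_ite ha,
      not_synchronizes_of_isBlock hB (hAB ha) hBu (sameTranslate_ite (coe_subset.2 hAB) ha)⟩
  · rintro ⟨f, hf, hns⟩
    exact exists_isBlock_of_not_synchronizes G (by omega) hf hns
end
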